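/- Let Ω be a nonempty closed set in Euclidean space ℝˢ, C ⊆ ℝˢ nonempty closed convex, x̄ ∈ Ω ∩ C, and suppose Ω is locally closed around x̄. Then the limiting normal cone with respect to C satisfies N_C(x̄, Ω) = Limsup_{x → x̄, x ∈ C} cone[x − Π(x, Ω ∩ C)], where Π(x, S) is the set of Euclidean projections of x onto S. -/

import Mathlib

/-! If `v` is a Fréchet normal to `S` at `x`, push `x` out to `y = x + τ v` and let `u` be a
nearest point of `S` to `y`. Comparing `‖y - u‖ ≤ ‖y - x‖` with the Fréchet inequality of `v`
at `x`, evaluated at `u`, gives `‖u - x‖ ≤ 2 τ ε`, so `(y - u) / τ` is within `2 ε` of `v`: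
every Fréchet normal is a limit of proximal normals `t (y - u)`, and `y` stays in the convex
set `C` for small `τ`. Conversely a proximal normal `t (y - u)` with `y ∈ C` is a Fréchet
normal at `u`, and it points from `u` into `C`, towards `y`. -/

open Set Filter Topology Metric

noncomputable section

def fnc {s : ℕ} (S : Set (EuclideanSpace ℝ (Fin s))) (x : EuclideanSpace ℝ (Fin s)) :
    Set (EuclideanSpace ℝ (Fin s)) :=
  {v | ∀ ε > (0:ℝ), ∀ᶠ y in nhdsWithin x S, (inner ℝ v (y - x) : ℝ) ≤ ε * ‖y - x‖}

def fncWrt {s : ℕ} (C Ω : Set (EuclideanSpace ℝ (Fin s))) (x : EuclideanSpace ℝ (Fin s)) :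
    Set (EuclideanSpace ℝ (Fin s)) :=
  {v | (∃ p > (0:ℝ), x + p • v ∈ C) ∧ v ∈ fnc (Ω ∩ C) x}

def lncWrt {s : ℕ} (C Ω : Set (EuclideanSpace ℝ (Fin s))) (xb : EuclideanSpace ℝ (Fin s)) :
    Set (EuclideanSpace ℝ (Fin s)) :=
  {v | ∃ (x : ℕ → EuclideanSpace ℝ (Fin s)) (vs : ℕ → EuclideanSpace ℝ (Fin s)),
    (∀ k, x k ∈ Ω ∩ C) ∧ Tendsto x atTop (𝓝 xb) ∧
    (∀ k, vs k ∈ fncWrt C Ω (x k)) ∧ Tendsto vs atTop (𝓝 v)}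

def proj {s : ℕ} (x : EuclideanSpace ℝ (Fin s)) (S : Set (EuclideanSpace ℝ (Fin s))) :
    Set (EuclideanSpace ℝ (Fin s)) :=
  {u | u ∈ S ∧ ‖u - x‖ = infDist x S}

open scoped RealInnerProductSpace

section InnerProductSpace

variable {E : Type*} [NormedAddCommGroup E] [InnerProductSpace ℝ E]

theorem two_inner_sub_le_norm_sub_sq_of_norm_sub_le {a u y : E} (h : ‖u - a‖ ≤ ‖y - a‖) :
    2 * ⟪a - u, y - u⟫ ≤ ‖y - u‖ ^ 2 := by
  have hexpand : ‖y - a‖ ^ 2 = ‖y - u‖ ^ 2 - 2 * ⟪a - u, y - u⟫ + ‖u - a‖ ^ 2 := by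
    rw [show y - a = (y - u) - (a - u) by abel, norm_sub_sq_real, real_inner_comm,
      norm_sub_rev a u]
  nlinarith [pow_le_pow_left₀ (norm_nonneg _) h 2]

theorem norm_sub_le_of_norm_sub_add_smul_le {x v u : E} {τ ε : ℝ} (hτ : 0 ≤ τ) (hε : 0 ≤ ε)
    (hcloser : ‖u - (x + τ • v)‖ ≤ ‖x - (x + τ • v)‖) (hv : ⟪v, u - x⟫ ≤ ε * ‖u - x‖) :
    ‖u - x‖ ≤ 2 * τ * ε := by
  have hsq : ‖u - x‖ ^ 2 ≤ 2 * τ * ⟪v, u - x⟫ := by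
    have key := two_inner_sub_le_norm_sub_sq_of_norm_sub_le hcloser
    rw [show x + τ • v - u = τ • v - (u - x) by abel, ← neg_sub u x, inner_sub_left,
      real_inner_smul_left, inner_neg_right, inner_neg_right, real_inner_self_eq_norm_sq,
      norm_neg] at key
    linarith
  by_contra! hlt
  nlinarith [mul_le_mul_of_nonneg_left hv (by positivity : 0 ≤ 2 * τ),
    mul_lt_mul_of_pos_left hlt (lt_of_le_of_lt (by positivity) hlt)]

end InnerProductSpace

theorem eventually_nhdsGT_zero_mul_lt (c : ℝ) {δ : ℝ} (hδ : 0 < δ) :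
    ∀ᶠ τ in 𝓝[>] (0:ℝ), τ * c < δ := by
  have hlim : Tendsto (fun τ : ℝ => τ * c) (𝓝 0) (𝓝 0) := by
    have hcont : Continuous fun τ : ℝ => τ * c := by fun_prop
    simpa using hcont.tendsto 0
  exact nhdsWithin_le_nhds (hlim.eventually (eventually_lt_nhds hδ))

theorem tendsto_of_dist_le_one_div_add_one {α : Type*} [PseudoMetricSpace α] {f g : ℕ → α}
    {a : α} (hg : Tendsto g atTop (𝓝 a)) (h : ∀ k, dist (g k) (f k) ≤ 1 / ((k:ℝ) + 1)) :
    Tendsto f atTop (𝓝 a) :=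
  tendsto_of_tendsto_of_dist hg
    (squeeze_zero (fun _ => dist_nonneg) h tendsto_one_div_add_atTop_nhds_zero_nat)

section Euclidean

variable {s : ℕ}

theorem nonempty_proj {S : Set (EuclideanSpace ℝ (Fin s))} (hS : IsClosed S) (hne : S.Nonempty)
    (x : EuclideanSpace ℝ (Fin s)) : (proj x S).Nonempty := by
  obtain ⟨u, hu, hdist⟩ := hS.exists_infDist_eq_dist hne x
  exact ⟨u, hu, by rw [hdist, dist_eq_norm, norm_sub_rev]⟩

theorem norm_sub_le_of_mem_proj {S : Set (EuclideanSpace ℝ (Fin s))}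
    {x u y : EuclideanSpace ℝ (Fin s)} (hu : u ∈ proj x S) (hy : y ∈ S) :
    ‖u - x‖ ≤ ‖y - x‖ := by
  rw [hu.2, ← dist_eq_norm, dist_comm]
  exact infDist_le_dist_of_mem hy

theorem smul_sub_mem_fnc_of_mem_proj {S : Set (EuclideanSpace ℝ (Fin s))}
    {x u : EuclideanSpace ℝ (Fin s)} {t : ℝ} (ht : 0 ≤ t) (hu : u ∈ proj x S) :
    t • (x - u) ∈ fnc S u := by
  intro ε hε
  have hnear : ∀ᶠ y in 𝓝[S] u, y ∈ ball u (2 * ε / (t + 1)) :=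
    mem_nhdsWithin_of_mem_nhds (ball_mem_nhds u (by positivity))
  filter_upwards [hnear, self_mem_nhdsWithin] with y hyu hyS
  have hinner : 2 * ⟪x - u, y - u⟫ ≤ ‖y - u‖ ^ 2 :=
    two_inner_sub_le_norm_sub_sq_of_norm_sub_le (norm_sub_le_of_mem_proj hu hyS)
  have hsmall : (t + 1) * ‖y - u‖ < 2 * ε := by
    rw [mem_ball, dist_eq_norm, lt_div_iff₀ (by positivity)] at hyu
    linarith
  rw [real_inner_smul_left]
  nlinarith [mul_le_mul_of_nonneg_left hinner ht, norm_nonneg (y - u),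
    mul_le_mul_of_nonneg_right hsmall.le (norm_nonneg (y - u)), mul_nonneg ht (norm_nonneg (y - u))]

theorem eventually_norm_sub_le_of_mem_proj_add_smul {S : Set (EuclideanSpace ℝ (Fin s))}
    {x v : EuclideanSpace ℝ (Fin s)} (hx : x ∈ S) (hv : v ∈ fnc S x) {η : ℝ} (hη : 0 < η) :
    ∀ᶠ τ in 𝓝[>] (0:ℝ), ∀ u ∈ proj (x + τ • v) S, ‖u - x‖ ≤ η * τ := by
  obtain ⟨δ, hδ, hfrechet⟩ := Metric.mem_nhdsWithin_iff.mp (hv (η / 2) (by positivity))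
  filter_upwards [self_mem_nhdsWithin, eventually_nhdsGT_zero_mul_lt (2 * ‖v‖) hδ]
    with τ (hτ : 0 < τ) hτδ u hu
  have hcloser := norm_sub_le_of_mem_proj hu hx
  have hux : ‖u - x‖ < δ := by
    have hstep : ‖x - (x + τ • v)‖ = τ * ‖v‖ := by
      rw [sub_add_cancel_left, norm_neg, norm_smul, Real.norm_of_nonneg hτ.le]
    calc ‖u - x‖ ≤ ‖u - (x + τ • v)‖ + ‖x - (x + τ • v)‖ := by
          rw [norm_sub_rev x]; exact norm_sub_le_norm_sub_add_norm_sub _ _ _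
      _ < δ := by linarith
  have := norm_sub_le_of_norm_sub_add_smul_le hτ.le (by positivity) hcloser
    (hfrechet ⟨by rwa [mem_ball, dist_eq_norm], hu.1⟩)
  linarith

theorem exists_proj_cone_near_of_mem_fncWrt {Ω C : Set (EuclideanSpace ℝ (Fin s))}
    (hS : IsClosed (Ω ∩ C)) (hCv : Convex ℝ C) {x v : EuclideanSpace ℝ (Fin s)}
    (hx : x ∈ Ω ∩ C) (hv : v ∈ fncWrt C Ω x) {η : ℝ} (hη : 0 < η) :
    ∃ y ∈ C, ∃ t : ℝ, 0 ≤ t ∧ ∃ u ∈ proj y (Ω ∩ C), ‖y - x‖ ≤ η ∧ ‖t • (y - u) - v‖ ≤ η := by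
  obtain ⟨⟨p, hp, hpC⟩, hfrechet⟩ := hv
  obtain ⟨τ, (hτ : 0 < τ), hτp, hτv, hnear⟩ := (eventually_mem_nhdsWithin.and
    ((eventually_nhdsGT_zero_mul_lt 1 hp).and ((eventually_nhdsGT_zero_mul_lt ‖v‖ hη).and
      (eventually_norm_sub_le_of_mem_proj_add_smul hx hfrechet hη)))).exists
  have hyC : x + τ • v ∈ C := by
    have h := hCv.add_smul_mem hx.2 hpC ⟨(by positivity : 0 ≤ τ / p), by
      rw [div_le_one hp]; linarith⟩
    rwa [smul_smul, div_mul_cancel₀ τ hp.ne'] at h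
  obtain ⟨u, hu⟩ := nonempty_proj hS ⟨x, hx⟩ (x + τ • v)
  refine ⟨x + τ • v, hyC, τ⁻¹, by positivity, u, hu, ?_, ?_⟩
  · rw [add_sub_cancel_left, norm_smul, Real.norm_of_nonneg hτ.le]
    exact hτv.le
  · calc ‖τ⁻¹ • (x + τ • v - u) - v‖ = τ⁻¹ * ‖u - x‖ := by
          rw [smul_sub, smul_add, smul_smul, inv_mul_cancel₀ hτ.ne', one_smul,
            show τ⁻¹ • x + v - τ⁻¹ • u - v = τ⁻¹ • (x - u) by rw [smul_sub]; abel,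
            norm_smul, Real.norm_of_nonneg (by positivity), norm_sub_rev]
      _ ≤ τ⁻¹ * (η * τ) := by gcongr; exact hnear u hu
      _ = η := by field_simp

theorem smul_sub_mem_fncWrt_of_mem_proj {Ω C : Set (EuclideanSpace ℝ (Fin s))}
    {x u : EuclideanSpace ℝ (Fin s)} {t : ℝ} (hx : x ∈ C) (ht : 0 ≤ t)
    (hu : u ∈ proj x (Ω ∩ C)) : t • (x - u) ∈ fncWrt C Ω u := by
  refine ⟨?_, smul_sub_mem_fnc_of_mem_proj ht hu⟩
  rcases ht.eq_or_lt with rfl | ht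
  · exact ⟨1, one_pos, by simpa using hu.1.2⟩
  · refine ⟨t⁻¹, inv_pos.2 ht, ?_⟩
    rwa [smul_smul, inv_mul_cancel₀ ht.ne', one_smul, add_sub_cancel]

/-- `Limsup_{x → xb, x ∈ C} cone[x − Π(x, S)]`. -/
def projConeLimsup (C S : Set (EuclideanSpace ℝ (Fin s))) (xb : EuclideanSpace ℝ (Fin s)) :
    Set (EuclideanSpace ℝ (Fin s)) :=
  {v | ∃ (x : ℕ → EuclideanSpace ℝ (Fin s)) (vs : ℕ → EuclideanSpace ℝ (Fin s)),
    (∀ k, x k ∈ C) ∧ Tendsto x atTop (𝓝 xb) ∧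
    (∀ k, ∃ t : ℝ, 0 ≤ t ∧ ∃ u ∈ proj (x k) S, vs k = t • (x k - u)) ∧
    Tendsto vs atTop (𝓝 v)}

theorem lncWrt_subset_projConeLimsup {Ω C : Set (EuclideanSpace ℝ (Fin s))}
    (hS : IsClosed (Ω ∩ C)) (hCv : Convex ℝ C) (xb : EuclideanSpace ℝ (Fin s)) :
    lncWrt C Ω xb ⊆ projConeLimsup C (Ω ∩ C) xb := by
  rintro v ⟨x, vs, hx, hxlim, hvs, hvlim⟩
  choose y hyC t ht u hu hyx hvy using fun k : ℕ =>
    exists_proj_cone_near_of_mem_fncWrt hS hCv (hx k) (hvs k) (Nat.one_div_pos_of_nat (n := k))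
  refine ⟨y, fun k => t k • (y k - u k), hyC, ?_, fun k => ⟨t k, ht k, u k, hu k, rfl⟩, ?_⟩
  · exact tendsto_of_dist_le_one_div_add_one hxlim fun k => by
      rw [dist_comm, dist_eq_norm]; exact hyx k
  · exact tendsto_of_dist_le_one_div_add_one hvlim fun k => by
      rw [dist_comm, dist_eq_norm]; exact hvy k

theorem projConeLimsup_subset_lncWrt {Ω C : Set (EuclideanSpace ℝ (Fin s))}
    {xb : EuclideanSpace ℝ (Fin s)} (hxb : xb ∈ Ω ∩ C) :
    projConeLimsup C (Ω ∩ C) xb ⊆ lncWrt C Ω xb := by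
  rintro v ⟨x, vs, hxC, hxlim, hcone, hvlim⟩
  choose t ht u hu hvs using hcone
  refine ⟨u, vs, fun k => (hu k).1, ?_,
    fun k => hvs k ▸ smul_sub_mem_fncWrt_of_mem_proj (hxC k) (ht k) (hu k), hvlim⟩
  refine tendsto_of_tendsto_of_dist hxlim (squeeze_zero (fun _ => dist_nonneg) (fun k => ?_)
    (tendsto_iff_dist_tendsto_zero.mp hxlim))
  rw [dist_comm, dist_eq_norm, dist_eq_norm, norm_sub_rev (x k)]
  exact norm_sub_le_of_mem_proj (hu k) hxb

end Euclidean

theorem stmt15_general {s : ℕ} (Ω C : Set (EuclideanSpace ℝ (Fin s)))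
    (hΩc : IsClosed Ω)
    (hCc : IsClosed C) (hCv : Convex ℝ C)
    (xb : EuclideanSpace ℝ (Fin s)) (hxb : xb ∈ Ω ∩ C) :
    lncWrt C Ω xb =
      {v | ∃ (x : ℕ → EuclideanSpace ℝ (Fin s)) (vs : ℕ → EuclideanSpace ℝ (Fin s)),
        (∀ k, x k ∈ C) ∧ Tendsto x atTop (𝓝 xb) ∧
        (∀ k, ∃ t : ℝ, 0 ≤ t ∧ ∃ u ∈ proj (x k) (Ω ∩ C), vs k = t • (x k - u)) ∧
        Tendsto vs atTop (𝓝 v)} :=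
  (lncWrt_subset_projConeLimsup (hΩc.inter hCc) hCv xb).antisymm
    (projConeLimsup_subset_lncWrt hxb)

/-- `N_C(xb, Ω)` equals the outer limit of `cone[x − Π(x, Ω ∩ C)]` as `x → xb` within `C`. -/
theorem stmt15 {s : ℕ} (Ω C : Set (EuclideanSpace ℝ (Fin s)))
    (hΩne : Ω.Nonempty) (hΩc : IsClosed Ω)
    (hCne : C.Nonempty) (hCc : IsClosed C) (hCv : Convex ℝ C)
    (xb : EuclideanSpace ℝ (Fin s)) (hxb : xb ∈ Ω ∩ C) :
    lncWrt C Ω xb =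
      {v | ∃ (x : ℕ → EuclideanSpace ℝ (Fin s)) (vs : ℕ → EuclideanSpace ℝ (Fin s)),
        (∀ k, x k ∈ C) ∧ Tendsto x atTop (𝓝 xb) ∧
        (∀ k, ∃ t : ℝ, 0 ≤ t ∧ ∃ u ∈ proj (x k) (Ω ∩ C), vs k = t • (x k - u)) ∧
        Tendsto vs atTop (𝓝 v)} :=
  stmt15_general Ω C hΩc hCc hCv xb hxb
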